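/- arXiv:1108.4439 — 4 statements merged into one kernel-verified Lean document; each statement's English description precedes it below -/
import Mathlib

section
/- For every finite candidate set C with |C| = m ≥ 2 and every preference pattern — an assignment to each unordered pair {a,b} of distinct candidates of either a strict preference (aPb or bPa) or indifference (aIb) — there exists a profile of exactly m(m−1) votes such that for all distinct candidates a,b: netadv(a,b) > 0 if the pattern has aPb, netadv(a,b) < 0 if the pattern has bPa, and netadv(a,b) = 0 if the pattern has aIb; in fact the constructed profile achieves netadv(a,b) = 2, −2, or 0 respectively. (McGarvey's Theorem) -/
/-- A vote over a finite candidate set `C` is a linear order on `C`, encoded as the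
ranking equivalence sending each candidate to its position (position `0` is the top). -/
abbrev Vote (C : Type*) [Fintype C] : Type _ := C ≃ Fin (Fintype.card C)

/-- `adv P a b` is the number of votes in the profile `P` ranking `a` above `b`. -/
def adv {C : Type*} [Fintype C] (P : List (Vote C)) (a b : C) : ℕ :=
  P.countP (fun v => decide (v a < v b))

/-- The net advantage of `a` over `b` in the profile `P`. -/
def netadv {C : Type*} [Fintype C] (P : List (Vote C)) (a b : C) : ℤ :=
  (adv P a b : ℤ) - (adv P b a : ℤ)

/-!
For distinct candidates `a`, `b` take a vote `v` in which `a` sits directly above `b`. Swapping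
`a` and `b` in `v` changes only the relative order of `a` and `b`, so `v` together with the
reversal of the swapped vote has net advantage `2` on `(a, b)`, `-2` on `(b, a)` and `0` on every
other pair, while a vote together with its own reversal has net advantage `0` everywhere.
Choosing one of these two-vote blocks for each of the `m(m-1)/2` unordered pairs according to
the pattern gives the profile.
-/

namespace Vote

variable {C : Type*} [Fintype C]

def reverse (v : Vote C) : Vote C := v.trans Fin.revPerm

@[simp]
lemma reverse_lt_reverse {v : Vote C} {x y : C} : v.reverse x < v.reverse y ↔ v y < v x :=
  Fin.rev_lt_rev

lemma exists_add_one_lt (x : C) (h : 1 < Fintype.card C) :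
    ∃ v : Vote C, (v x : ℕ) + 1 < Fintype.card C := by
  let e : Vote C := Fintype.equivFin C
  by_cases he : (e x : ℕ) + 1 < Fintype.card C
  · exact ⟨e, he⟩
  · refine ⟨e.reverse, ?_⟩
    simp only [reverse, Equiv.trans_apply, Fin.revPerm_apply, Fin.val_rev]
    omega

lemma exists_adjacent {a b : C} (hab : a ≠ b) : ∃ v : Vote C, (v a : ℕ) + 1 = v b := by
  obtain ⟨v, hv⟩ := exists_add_one_lt a (Fintype.one_lt_card_iff.2 ⟨a, b, hab⟩)
  refine ⟨v.trans (Equiv.swap (v b) ⟨v a + 1, hv⟩), ?_⟩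
  have hne : v a ≠ ⟨v a + 1, hv⟩ := Fin.ne_of_val_ne (by simp)
  simp [Equiv.swap_apply_of_ne_of_ne (v.injective.ne hab) hne]

variable [DecidableEq C] in
lemma swap_lt_swap_iff_of_adjacent {v : Vote C} {a b x y : C} (hv : (v a : ℕ) + 1 = v b)
    (h : s(x, y) ≠ s(a, b)) :
    v (Equiv.swap a b x) < v (Equiv.swap a b y) ↔ v x < v y := by
  have hval {c d : C} (hcd : (v c : ℕ) = v d) : c = d := v.injective (Fin.val_injective hcd)
  rw [Ne, Sym2.eq_iff] at h
  simp only [Fin.lt_def, Equiv.swap_apply_def]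
  -- no candidate is ranked strictly between `a` and `b`
  grind

end Vote

section NetAdvantage

variable {C : Type*} [Fintype C]

lemma netadv_swap (P : List (Vote C)) (x y : C) : netadv P y x = -netadv P x y := by
  simp [netadv]

lemma netadv_append (P Q : List (Vote C)) (x y : C) :
    netadv (P ++ Q) x y = netadv P x y + netadv Q x y := by
  simp only [netadv, adv, List.countP_append]
  push_cast
  ring

lemma netadv_flatMap {α : Type*} (l : List α) (f : α → List (Vote C)) (x y : C) :
    netadv (l.flatMap f) x y = (l.map fun p => netadv (f p) x y).sum := by
  induction l with
  | nil => simp [netadv, adv]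
  | cons p l ih => rw [List.flatMap_cons, netadv_append, ih, List.map_cons, List.sum_cons]

lemma netadv_map_reverse (P : List (Vote C)) (x y : C) :
    netadv (P.map Vote.reverse) x y = netadv P y x := by
  simp [netadv, adv, List.countP_map, Function.comp_def]

lemma netadv_singleton (v : Vote C) {x y : C} (hxy : x ≠ y) :
    netadv [v] x y = if v x < v y then 1 else -1 := by
  rcases lt_or_gt_of_ne (v.injective.ne hxy) with h | h <;>
    simp [netadv, adv, h, h.not_gt]

lemma netadv_pair_reverse (v w : Vote C) (x y : C) :
    netadv [v, w.reverse] x y = netadv [v] x y - netadv [w] x y := by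
  rw [show [v, w.reverse] = [v] ++ [w].map Vote.reverse from rfl, netadv_append,
    netadv_map_reverse, netadv_swap [w], sub_eq_add_neg]

lemma netadv_pair_reverse_self (v : Vote C) (x y : C) : netadv [v, v.reverse] x y = 0 := by
  rw [netadv_pair_reverse, sub_self]

end NetAdvantage

namespace Sym2

variable {α : Type*}

lemma mk_out (s : Sym2 α) : s(s.out.1, s.out.2) = s :=
  Quot.out_eq s

lemma out_fst_ne_out_snd {s : Sym2 α} (hs : ¬s.IsDiag) : s.out.1 ≠ s.out.2 := by
  rwa [Ne, ← mk_isDiag_iff, mk_out]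

lemma card_filter_not_isDiag_mul_two [Fintype α] [DecidableEq α] :
    (Finset.univ.filter fun s : Sym2 α => ¬s.IsDiag).card * 2 =
      Fintype.card α * (Fintype.card α - 1) := by
  rw [← Fintype.card_subtype, card_subtype_not_diag, Nat.choose_two_right,
    Nat.div_mul_cancel (Nat.even_mul_pred_self _).two_dvd]

end Sym2

section Blocks

variable {C : Type*} [Fintype C] [DecidableEq C]

def adjacentBlock (v : Vote C) (a b : C) : List (Vote C) :=
  [v, Vote.reverse ((Equiv.swap a b).trans v)]

lemma netadv_adjacentBlock {v : Vote C} {a b x y : C} (hv : (v a : ℕ) + 1 = v b) (hxy : x ≠ y) :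
    netadv (adjacentBlock v a b) x y =
      if x = a ∧ y = b then 2 else if x = b ∧ y = a then -2 else 0 := by
  rw [adjacentBlock, netadv_pair_reverse]
  by_cases h : s(x, y) = s(a, b)
  · have hab : v a < v b := Fin.lt_def.2 (by omega)
    rcases Sym2.eq_iff.1 h with ⟨rfl, rfl⟩ | ⟨rfl, rfl⟩
    · simp [netadv_singleton _ hxy, hab, hab.not_gt]
    · simp [netadv_singleton _ hxy, hab, hab.not_gt, hxy]
  · have hswap := Vote.swap_lt_swap_iff_of_adjacent hv h
    rw [Sym2.eq_iff, not_or] at h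
    simp only [netadv_singleton _ hxy, Equiv.trans_apply, hswap, if_neg h.1, if_neg h.2, sub_self]

def patternBlock (pref : C → C → Prop) [DecidableRel pref] (v : C → C → Vote C) (a b : C) :
    List (Vote C) :=
  if pref a b then adjacentBlock (v a b) a b
  else if pref b a then adjacentBlock (v b a) b a
  else [v a b, (v a b).reverse]

variable {pref : C → C → Prop} [DecidableRel pref] {v : C → C → Vote C}

lemma length_patternBlock (a b : C) : (patternBlock pref v a b).length = 2 := by
  unfold patternBlock
  split_ifs <;> rfl

lemma netadv_patternBlock (hasym : ∀ a b : C, pref a b → ¬ pref b a)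
    (hv : ∀ a b : C, a ≠ b → (v a b a : ℕ) + 1 = v a b b) {a b x y : C} (hab : a ≠ b)
    (hxy : x ≠ y) :
    netadv (patternBlock pref v a b) x y =
      if s(x, y) = s(a, b) then (if pref x y then 2 else if pref y x then -2 else 0) else 0 := by
  unfold patternBlock
  split_ifs with h₁ h₂ <;>
    simp only [netadv_adjacentBlock (hv _ _ hab) hxy, netadv_adjacentBlock (hv _ _ hab.symm) hxy,
      netadv_pair_reverse_self] <;>
    grind [Sym2.eq_iff]

noncomputable def mcgarveyProfile (pref : C → C → Prop) [DecidableRel pref]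
    (v : C → C → Vote C) : List (Vote C) :=
  (Finset.univ.filter fun s : Sym2 C => ¬s.IsDiag).toList.flatMap fun s =>
    patternBlock pref v s.out.1 s.out.2

lemma length_mcgarveyProfile :
    (mcgarveyProfile pref v).length = Fintype.card C * (Fintype.card C - 1) := by
  simp only [mcgarveyProfile, List.length_flatMap, length_patternBlock]
  rw [List.map_const', List.sum_replicate, Finset.length_toList, smul_eq_mul,
    Sym2.card_filter_not_isDiag_mul_two]

lemma netadv_mcgarveyProfile (hasym : ∀ a b : C, pref a b → ¬ pref b a)
    (hv : ∀ a b : C, a ≠ b → (v a b a : ℕ) + 1 = v a b b) {x y : C} (hxy : x ≠ y) :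
    netadv (mcgarveyProfile pref v) x y =
      if pref x y then 2 else if pref y x then -2 else 0 := by
  have hxy' : s(x, y) ∈ Finset.univ.filter fun s : Sym2 C => ¬s.IsDiag := by simpa using hxy
  rw [mcgarveyProfile, netadv_flatMap, Finset.sum_map_toList, Finset.sum_congr rfl fun s hs => by
    rw [netadv_patternBlock hasym hv (Sym2.out_fst_ne_out_snd (Finset.mem_filter.1 hs).2) hxy,
      Sym2.mk_out], Finset.sum_ite_eq, if_pos hxy']

end Blocks

theorem mcgarvey_general {C : Type*} [Fintype C] [DecidableEq C]
    (pref : C → C → Prop)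
    (hasym : ∀ a b : C, pref a b → ¬ pref b a) :
    ∃ P : List (Vote C),
      P.length = Fintype.card C * (Fintype.card C - 1) ∧
      ∀ a b : C, a ≠ b →
        (pref a b → netadv P a b = 2) ∧
        (pref b a → netadv P a b = -2) ∧
        (¬ pref a b → ¬ pref b a → netadv P a b = 0) := by
  classical
  have : Nonempty (Vote C) := ⟨Fintype.equivFin C⟩
  choose! v hv using fun (a b : C) (hab : a ≠ b) => Vote.exists_adjacent hab
  refine ⟨mcgarveyProfile pref v, length_mcgarveyProfile, fun a b hab => ?_⟩
  rw [netadv_mcgarveyProfile hasym hv hab]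
  exact ⟨fun h => by simp [h], fun h => by simp [h, hasym b a h],
    fun h₁ h₂ => by simp [h₁, h₂]⟩

/-- **McGarvey's Theorem.** For any preference pattern (assigning to each pair of distinct
candidates either a strict preference or indifference, encoded by an asymmetric relation
`pref`, indifference being the absence of a strict preference either way) on a candidate
set of size `m ≥ 2`, there is a profile of exactly `m * (m - 1)` votes whose net advantage
is `2`, `-2`, or `0` according to the pattern. -/
theorem mcgarvey {C : Type*} [Fintype C] [DecidableEq C]
    (hm : 2 ≤ Fintype.card C)
    (pref : C → C → Prop)
    (hasym : ∀ a b : C, pref a b → ¬ pref b a) :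
    ∃ P : List (Vote C),
      P.length = Fintype.card C * (Fintype.card C - 1) ∧
      ∀ a b : C, a ≠ b →
        (pref a b → netadv P a b = 2) ∧
        (pref b a → netadv P a b = -2) ∧
        (¬ pref a b → ¬ pref b a → netadv P a b = 0) :=
  mcgarvey_general pref hasym
end

section
/- Let C be a finite candidate set with |C| = m ≥ 2, let a,b ∈ C be distinct, and let c₁,…,c_{m−2} enumerate C∖{a,b}. Consider the profile consisting of the two votes v₁ : a > b > c₁ > ⋯ > c_{m−2} and v₂ : c_{m−2} > ⋯ > c₁ > a > b. Then netadv(a,b) = 2, and netadv(x,y) = 0 for every pair of distinct candidates {x,y} ≠ {a,b}. -/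
section TwoVotes

variable {C : Type*} [Fintype C] (v₁ v₂ : Vote C) {x y : C}

lemma netadv_pair_eq_two (h₁ : v₁ x < v₁ y) (h₂ : v₂ x < v₂ y) :
    netadv [v₁, v₂] x y = 2 := by
  simp [netadv, adv, h₁, h₂, h₁.not_gt, h₂.not_gt]

lemma netadv_pair_eq_zero (hxy : x ≠ y) (h : v₁ x < v₁ y ↔ v₂ y < v₂ x) :
    netadv [v₁, v₂] x y = 0 := by
  have h₁ : v₁ x ≠ v₁ y := v₁.injective.ne hxy
  have h₂ : v₂ x ≠ v₂ y := v₂.injective.ne hxy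
  simp only [netadv, adv, List.countP_cons, List.countP_nil, decide_eq_true_eq]
  split_ifs <;> grind

end TwoVotes

lemma eq_or_eq_or_exists_apply_eq {ι C : Type*} {a b : C}
    (g : ι ≃ {x : C // x ≠ a ∧ x ≠ b}) (z : C) :
    (z = a ∨ z = b) ∨ ∃ i, (g i : C) = z := by
  by_cases h : z = a ∨ z = b
  · exact Or.inl h
  · exact Or.inr ⟨g.symm ⟨z, not_or.mp h⟩, by simp⟩

theorem mcgarvey_gadget_general {C : Type*} [Fintype C]
    (a b : C)
    (g : Fin (Fintype.card C - 2) ≃ {x : C // x ≠ a ∧ x ≠ b})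
    (v₁ v₂ : Vote C)
    (h1a : (v₁ a : ℕ) = 0)
    (h1b : (v₁ b : ℕ) = 1)
    (h1g : ∀ i : Fin (Fintype.card C - 2), (v₁ (g i : C) : ℕ) = (i : ℕ) + 2)
    (h2g : ∀ i : Fin (Fintype.card C - 2),
      (v₂ (g i : C) : ℕ) = (Fintype.card C - 3) - (i : ℕ))
    (h2a : (v₂ a : ℕ) = Fintype.card C - 2)
    (h2b : (v₂ b : ℕ) = Fintype.card C - 1) :
    netadv [v₁, v₂] a b = 2 ∧
    ∀ x y : C, x ≠ y → ¬(x = a ∧ y = b) → ¬(x = b ∧ y = a) →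
      netadv [v₁, v₂] x y = 0 := by
  have hcard : 1 < Fintype.card C := h1b ▸ (v₁ b).isLt
  have top : ∀ z, z = a ∨ z = b → (v₁ z : ℕ) ≤ 1 ∧ Fintype.card C - 2 ≤ v₂ z := by
    rintro z (rfl | rfl) <;> omega
  refine ⟨netadv_pair_eq_two v₁ v₂ (by simp [Fin.lt_def, h1a, h1b])
    (by rw [Fin.lt_def, h2a, h2b]; omega), ?_⟩
  intro x y hxy hnab hnba
  refine netadv_pair_eq_zero v₁ v₂ hxy ?_
  simp only [Fin.lt_def]
  rcases eq_or_eq_or_exists_apply_eq g x with hx | ⟨i, rfl⟩ <;>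
    rcases eq_or_eq_or_exists_apply_eq g y with hy | ⟨j, rfl⟩
  · rcases hx with rfl | rfl <;> rcases hy with rfl | rfl <;> tauto
  · have := top x hx; have := j.isLt; rw [h1g, h2g]; omega
  · have := top y hy; have := i.isLt; rw [h1g, h2g]; omega
  · have hij : (i : ℕ) ≠ j := fun h => hxy (by rw [Fin.val_injective h])
    have := i.isLt; have := j.isLt
    rw [h1g, h1g, h2g, h2g]; omega

/-- The basic McGarvey gadget: with distinct candidates `a, b` and `c₁, …, c_{m-2}`
enumerating the remaining candidates (via the equivalence `g`, with `g i` playing the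
role of `c_{i+1}`), the two votes
`v₁ : a > b > c₁ > ⋯ > c_{m-2}` and `v₂ : c_{m-2} > ⋯ > c₁ > a > b` give
`netadv a b = 2` and `netadv x y = 0` for every other pair of distinct candidates. -/
theorem mcgarvey_gadget {C : Type*} [Fintype C] [DecidableEq C]
    (hm : 2 ≤ Fintype.card C) (a b : C) (hab : a ≠ b)
    (g : Fin (Fintype.card C - 2) ≃ {x : C // x ≠ a ∧ x ≠ b})
    (v₁ v₂ : Vote C)
    (h1a : (v₁ a : ℕ) = 0)
    (h1b : (v₁ b : ℕ) = 1)
    (h1g : ∀ i : Fin (Fintype.card C - 2), (v₁ (g i : C) : ℕ) = (i : ℕ) + 2)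
    (h2g : ∀ i : Fin (Fintype.card C - 2),
      (v₂ (g i : C) : ℕ) = (Fintype.card C - 3) - (i : ℕ))
    (h2a : (v₂ a : ℕ) = Fintype.card C - 2)
    (h2b : (v₂ b : ℕ) = Fintype.card C - 1) :
    netadv [v₁, v₂] a b = 2 ∧
    ∀ x y : C, x ≠ y → ¬(x = a ∧ y = b) → ¬(x = b ∧ y = a) →
      netadv [v₁, v₂] x y = 0 :=
  mcgarvey_gadget_general a b g v₁ v₂ h1a h1b h1g h2g h2a h2b
end

section
/- Consider a Borda election with candidate set C = {c*} ∪ {c_1,…,c_m} of m+1 candidates, a profile V_NM of nonmanipulative votes giving each candidate x Borda score score(x), and t manipulative votes to be added. Define the gap of c_i as g_i = score(c*) + t·m − score(c_i). If there exist t votes (linear orders on C) such that, after adding them to V_NM, the final Borda score of c* is at least the final Borda score of every c_i, then for every j ∈ {1,…,m} and every subset S ⊆ {c_1,…,c_m} with |S| = j, one has ∑_{c_i ∈ S} g_i ≥ t·j(j−1)/2; in particular the sum of the j smallest gaps is at least t·j(j−1)/2. -/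
/-- Borda points awarded by the vote `v` to candidate `x`. -/
def bordaPts {C : Type*} [Fintype C] (v : Vote C) (x : C) : ℕ :=
  (Fintype.card C - 1) - (v x : ℕ)

/-- The Borda score of candidate `x` in the profile `P`. -/
def bordaScore {C : Type*} [Fintype C] (P : List (Vote C)) (x : C) : ℕ :=
  (P.map (fun v => bordaPts v x)).sum

open Finset

theorem Finset.sum_range_card_le_sum_of_injOn {ι : Type*} {s : Finset ι} {f : ι → ℕ}
    (hf : Set.InjOn f s) : ∑ n ∈ range #s, n ≤ ∑ i ∈ s, f i := by
  have h := Finset.sum_range_le_sum (s := s.image fun i => (f i : ℤ)) (c := 0) (by simp)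
  have hcast : Set.InjOn (fun i => (f i : ℤ)) s := Nat.cast_injective.comp_injOn hf
  rw [card_image_of_injOn hcast, sum_image hcast] at h
  have hℤ : ((∑ n ∈ range #s, n : ℕ) : ℤ) ≤ ((∑ i ∈ s, f i : ℕ) : ℤ) := by
    push_cast
    simpa using h
  exact_mod_cast hℤ

section Borda

variable {C : Type*} [Fintype C]

theorem bordaPts_le (v : Vote C) (x : C) : bordaPts v x ≤ Fintype.card C - 1 :=
  Nat.sub_le _ _

theorem bordaPts_injective (v : Vote C) : Function.Injective (bordaPts v) := by
  intro x y hxy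
  have hx := (v x).isLt
  have hy := (v y).isLt
  unfold bordaPts at hxy
  exact v.injective (Fin.ext (by omega))

@[simp]
theorem bordaScore_cons (v : Vote C) (P : List (Vote C)) (x : C) :
    bordaScore (v :: P) x = bordaPts v x + bordaScore P x := by
  simp [bordaScore]

theorem bordaScore_append (P Q : List (Vote C)) (x : C) :
    bordaScore (P ++ Q) x = bordaScore P x + bordaScore Q x := by
  simp [bordaScore]

theorem bordaScore_le_length_mul (P : List (Vote C)) (x : C) :
    bordaScore P x ≤ P.length * (Fintype.card C - 1) := by
  have h := List.sum_le_card_nsmul (P.map fun v => bordaPts v x) (Fintype.card C - 1) <| by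
    simp only [List.mem_map]
    rintro _ ⟨v, -, rfl⟩
    exact bordaPts_le v x
  simpa [bordaScore] using h

theorem length_mul_le_sum_bordaScore (P : List (Vote C)) (S : Finset C) :
    P.length * (#S * (#S - 1) / 2) ≤ ∑ x ∈ S, bordaScore P x := by
  induction P with
  | nil => simp
  | cons v P ih =>
    have hv : #S * (#S - 1) / 2 ≤ ∑ x ∈ S, bordaPts v x := by
      rw [← sum_range_id]
      exact sum_range_card_le_sum_of_injOn (bordaPts_injective v).injOn
    simp only [bordaScore_cons, sum_add_distrib, List.length_cons]
    linarith

end Borda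

theorem borda_manipulation_gap_bound_general {C : Type*} [Fintype C]
    (cstar : C) (VNM W : List (Vote C)) (t : ℕ) (hW : W.length = t)
    (gap : C → ℤ)
    (hgap : ∀ x : C, gap x =
      (bordaScore VNM cstar : ℤ) + (t : ℤ) * ((Fintype.card C : ℤ) - 1)
        - (bordaScore VNM x : ℤ))
    (hwin : ∀ x : C, x ≠ cstar →
      bordaScore (VNM ++ W) x ≤ bordaScore (VNM ++ W) cstar) :
    ∀ S : Finset C, cstar ∉ S →
      ((t * (S.card * (S.card - 1) / 2) : ℕ) : ℤ) ≤ ∑ x ∈ S, gap x := by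
  intro S hS
  have hcard : ((Fintype.card C - 1 : ℕ) : ℤ) = (Fintype.card C : ℤ) - 1 :=
    Nat.cast_pred (Fintype.card_pos_iff.mpr ⟨cstar⟩)
  have hWcstar := hW ▸ bordaScore_le_length_mul W cstar
  have hW_le_gap : ∀ x ∈ S, (bordaScore W x : ℤ) ≤ gap x := by
    intro x hx
    have hbeat := hwin x (ne_of_mem_of_not_mem hx hS)
    rw [bordaScore_append, bordaScore_append] at hbeat
    rw [hgap x, ← hcard]
    zify at hbeat hWcstar
    linarith
  calc ((t * (#S * (#S - 1) / 2) : ℕ) : ℤ)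
      ≤ ∑ x ∈ S, (bordaScore W x : ℤ) := by
        exact_mod_cast hW ▸ length_mul_le_sum_bordaScore W S
    _ ≤ ∑ x ∈ S, gap x := sum_le_sum hW_le_gap

/-- Necessary condition for Borda manipulation: in a Borda election with candidates
`{c*} ∪ {c_1, …, c_m}` (so `m = |C| - 1`), nonmanipulative profile `VNM`, and `t`
manipulative votes `W`, define the gap of a candidate `x ≠ c*` as
`g(x) = score(c*) + t·m - score(x)` (scores over `VNM`). If after adding `W` the final
Borda score of `c*` is at least that of every other candidate, then for every set `S`
of `j` non-`c*` candidates, `∑_{x ∈ S} g(x) ≥ t·j(j-1)/2`; in particular the sum of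
the `j` smallest gaps is at least `t·j(j-1)/2`. -/
theorem borda_manipulation_gap_bound {C : Type*} [Fintype C] [DecidableEq C]
    (hm : 2 ≤ Fintype.card C)
    (cstar : C) (VNM W : List (Vote C)) (t : ℕ) (hW : W.length = t)
    (gap : C → ℤ)
    (hgap : ∀ x : C, gap x =
      (bordaScore VNM cstar : ℤ) + (t : ℤ) * ((Fintype.card C : ℤ) - 1)
        - (bordaScore VNM x : ℤ))
    (hwin : ∀ x : C, x ≠ cstar →
      bordaScore (VNM ++ W) x ≤ bordaScore (VNM ++ W) cstar) :
    ∀ S : Finset C, cstar ∉ S →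
      ((t * (S.card * (S.card - 1) / 2) : ℕ) : ℤ) ≤ ∑ x ∈ S, gap x :=
  borda_manipulation_gap_bound_general cstar VNM W t hW gap hgap hwin
end

section
/- Let k ≥ 1 and let a_1,…,a_k be integers with 1 ≤ a_i ≤ 2k for all i and ∑_{i=1}^k a_i = k(k+1). Then the following are equivalent: (i) there exist permutations ψ₁ and ψ₂ of {1,…,k} such that ψ₁(i) + ψ₂(i) = a_i for every i (a solution of the 2-Numerical Matching with Target Sums instance); (ii) there exist two linear orders on the (k+1)-element candidate set {p, c_1,…,c_k}, each ranking p first, such that for every i the total Borda points received by c_i from the two orders is at most 2k − a_i. -/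
/-!
A vote ranking `p` first is the same as a permutation `ψ` of `Fin k` placing `c_i` at
position `ψ i + 1`, so `c_i` receives `k - 1 - ψ i` points from it; the Borda bound for `c_i`
thus says `a_i ≤ (ψ₁ i + 1) + (ψ₂ i + 1)`. Both sides of these `k` inequalities sum to
`k(k+1)`, so they are all equalities, which is exactly a 2NMTS solution.
-/

open Equiv Finset

theorem Equiv.optionCongr_removeNone_of_apply_none {α β : Type*} {e : Option α ≃ Option β}
    (he : e none = none) : optionCongr (removeNone e) = e := by
  ext1 x
  cases x with
  | none => simp [he]
  | some x =>
    obtain ⟨y, hy⟩ := Option.ne_none_iff_exists'.mp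
      (fun h => Option.some_ne_none x (e.injective (h.trans he.symm)))
    simp [removeNone_some e ⟨y, hy⟩]

variable {k : ℕ}

def topVote (ψ : Perm (Fin k)) : Option (Fin k) ≃ Fin (k + 1) :=
  (optionCongr ψ).trans (finSuccEquiv k).symm

@[simp]
theorem topVote_none (ψ : Perm (Fin k)) : topVote ψ none = 0 := by
  simp [topVote]

@[simp]
theorem topVote_some (ψ : Perm (Fin k)) (i : Fin k) : topVote ψ (some i) = (ψ i).succ := by
  simp [topVote]

theorem exists_eq_topVote {v : Option (Fin k) ≃ Fin (k + 1)} (hv : v none = 0) :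
    ∃ ψ : Perm (Fin k), v = topVote ψ := by
  set e : Perm (Option (Fin k)) := v.trans (finSuccEquiv k)
  refine ⟨removeNone e, ?_⟩
  rw [topVote, optionCongr_removeNone_of_apply_none (by simp [e, hv])]
  ext1 x
  simp [e]

theorem two_mul_sum_perm_add_one (ψ : Perm (Fin k)) :
    2 * ∑ i, ((ψ i : ℕ) + 1) = k * (k + 1) := by
  have gauss := sum_range_id_mul_two (k + 1)
  rw [sum_range_succ', add_zero, Nat.add_sub_cancel] at gauss
  rw [Equiv.sum_comp ψ (fun j => (j : ℕ) + 1), Fin.sum_univ_eq_sum_range (· + 1)]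
  linarith

theorem add_perm_eq_of_le_add_perm {a : Fin k → ℕ} (hsum : ∑ i, a i = k * (k + 1))
    (ψ₁ ψ₂ : Perm (Fin k)) (hle : ∀ i, a i ≤ ((ψ₁ i : ℕ) + 1) + ((ψ₂ i : ℕ) + 1)) (i : Fin k) :
    ((ψ₁ i : ℕ) + 1) + ((ψ₂ i : ℕ) + 1) = a i := by
  have hsums : ∑ i, a i = ∑ i, (((ψ₁ i : ℕ) + 1) + ((ψ₂ i : ℕ) + 1)) := by
    have h₁ := two_mul_sum_perm_add_one ψ₁
    have h₂ := two_mul_sum_perm_add_one ψ₂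
    rw [sum_add_distrib]
    omega
  exact ((sum_eq_sum_iff_of_le fun i _ => hle i).mp hsums i (mem_univ i)).symm

theorem twoNMTS_iff_borda_general (k : ℕ) (a : Fin k → ℕ)
    (ha : ∀ i, 1 ≤ a i ∧ a i ≤ 2 * k) (hsum : ∑ i, a i = k * (k + 1)) :
    (∃ ψ₁ ψ₂ : Equiv.Perm (Fin k),
      ∀ i, (((ψ₁ i : ℕ) + 1) + ((ψ₂ i : ℕ) + 1)) = a i) ↔
    (∃ v₁ v₂ : Option (Fin k) ≃ Fin (k + 1),
      v₁ none = 0 ∧ v₂ none = 0 ∧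
      ∀ i : Fin k,
        (k - (v₁ (some i) : ℕ)) + (k - (v₂ (some i) : ℕ)) ≤ 2 * k - a i) := by
  constructor
  · rintro ⟨ψ₁, ψ₂, hψ⟩
    refine ⟨topVote ψ₁, topVote ψ₂, topVote_none ψ₁, topVote_none ψ₂, fun i => ?_⟩
    have := (ψ₁ i).isLt
    have := (ψ₂ i).isLt
    simp only [topVote_some, Fin.val_succ, ← hψ i]
    omega
  · rintro ⟨v₁, v₂, hv₁, hv₂, hbound⟩
    obtain ⟨ψ₁, rfl⟩ := exists_eq_topVote hv₁
    obtain ⟨ψ₂, rfl⟩ := exists_eq_topVote hv₂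
    refine ⟨ψ₁, ψ₂, add_perm_eq_of_le_add_perm hsum ψ₁ ψ₂ fun i => ?_⟩
    have hi := hbound i
    simp only [topVote_some, Fin.val_succ] at hi
    have := (ha i).2
    have := (ψ₁ i).isLt
    have := (ψ₂ i).isLt
    omega

/-- **2NMTS ↔ Borda manipulation core.** Let `a_1, …, a_k` (indexed by `Fin k`, with
`a i` playing the role of `a_{i+1}`) be positive integers with `a_i ≤ 2k` and
`∑ a_i = k(k+1)`. Candidates are `Option (Fin k)`: `none` is the preferred candidate
`p` and `some i` is `c_{i+1}`; a vote is an equivalence onto `Fin (k+1)` giving each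
candidate its position (position `0` is the top, Borda points `k - position`).
Permutations of `{1, …, k}` are encoded as `Equiv.Perm (Fin k)`, with `ψ i + 1` the
actual value in `{1, …, k}`. Then the 2NMTS instance has a solution iff there are two
votes ranking `p` first after which every `c_i` gains at most `2k - a_i` Borda points. -/
theorem twoNMTS_iff_borda (k : ℕ) (hk : 1 ≤ k) (a : Fin k → ℕ)
    (ha : ∀ i, 1 ≤ a i ∧ a i ≤ 2 * k) (hsum : ∑ i, a i = k * (k + 1)) :
    (∃ ψ₁ ψ₂ : Equiv.Perm (Fin k),
      ∀ i, (((ψ₁ i : ℕ) + 1) + ((ψ₂ i : ℕ) + 1)) = a i) ↔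
    (∃ v₁ v₂ : Option (Fin k) ≃ Fin (k + 1),
      v₁ none = 0 ∧ v₂ none = 0 ∧
      ∀ i : Fin k,
        (k - (v₁ (some i) : ℕ)) + (k - (v₂ (some i) : ℕ)) ≤ 2 * k - a i) :=
  twoNMTS_iff_borda_general k a ha hsum
end
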